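/- arXiv:2012.08944 — 2 statements merged into one kernel-verified Lean document; each statement's English description precedes it below -/
import Mathlib

section
/- For all real z and α: J_0(z) + 2·Σ_{k=1}^∞ J_{4k}(z)·cos(4kα) = (1/2)[cos(z·sin α) + cos(z·cos α)]. -/
/-!
The function `θ ↦ exp (i z sin θ)` is smooth and `2π`-periodic, and by the definition of `besselJ`
its Fourier coefficients are the `J_n(z)`. Integrating by parts twice bounds them by `O(1/n²)`, so
its Fourier series converges pointwise: this is the Jacobi–Anger expansion
`exp (i z sin θ) = ∑ₙ J_n(z) e^{inθ}`. Averaging it over the four points `θ = α + jπ/2` keeps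
exactly the terms with `4 ∣ n`, while `sin (α + jπ/2)` runs through `± sin α, ± cos α`, so the
average is `(cos (z sin α) + cos (z cos α)) / 2`. Finally `J_{-n} = J_n` for even `n` folds the
sum over `ℤ` into the cosine series over `n ≥ 1`.
-/

open scoped Real

/-- Bessel function of the first kind of integer order `m`,
defined by `J_m(z) = (1/2π) ∫_0^{2π} e^{i z sin θ - i m θ} dθ`. -/
noncomputable def besselJ (m : ℤ) (z : ℂ) : ℂ :=
  (1 / (2 * Real.pi)) * ∫ θ in (0:ℝ)..(2 * Real.pi),
    Complex.exp (z * Complex.sin (θ:ℂ) * Complex.I - (m:ℂ) * (θ:ℂ) * Complex.I)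

open Complex Finset Function MeasureTheory

theorem Function.Periodic.deriv {𝕜 F : Type*} [NontriviallyNormedField 𝕜] [NormedAddCommGroup F]
    [NormedSpace 𝕜 F] {f : 𝕜 → F} {T : 𝕜} (hf : Periodic f T) : Periodic (deriv f) T := fun x => by
  rw [← deriv_comp_add_const, hf.funext]

section FourierCoeffOn

variable {a b : ℝ}

theorem norm_fourierCoeffOn_le {E : Type*} [NormedAddCommGroup E] [NormedSpace ℂ E] (hab : a < b)
    {f : ℝ → E} {M : ℝ} (hM : ∀ x ∈ Set.Icc a b, ‖f x‖ ≤ M) (n : ℤ) :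
    ‖fourierCoeffOn hab f n‖ ≤ M := by
  have hba : 0 < b - a := sub_pos.mpr hab
  have hint : ‖∫ x in a..b, fourier (-n) (x : AddCircle (b - a)) • f x‖ ≤ M * |b - a| := by
    refine intervalIntegral.norm_integral_le_of_norm_le_const fun x hx => ?_
    rw [norm_smul, fourier_apply, Circle.norm_coe, one_mul]
    exact hM x (Set.Ioc_subset_Icc_self (Set.uIoc_of_le hab.le ▸ hx))
  rw [fourierCoeffOn_eq_integral, norm_smul, Real.norm_of_nonneg (by positivity)]
  calc 1 / (b - a) * ‖∫ x in a..b, fourier (-n) (x : AddCircle (b - a)) • f x‖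
      ≤ 1 / (b - a) * (M * |b - a|) := by gcongr
    _ = M := by rw [abs_of_pos hba]; field_simp

theorem fourierCoeffOn_of_hasDerivAt_of_eq (hab : a < b) {f f' : ℝ → ℂ}
    (hf : ∀ x, HasDerivAt f (f' x) x) (hf' : IntervalIntegrable f' volume a b) (hfab : f b = f a)
    {n : ℤ} (hn : n ≠ 0) :
    fourierCoeffOn hab f n = ((b - a : ℝ) : ℂ) / (2 * π * I * n) * fourierCoeffOn hab f' n := by
  rw [fourierCoeffOn_of_hasDerivAt hab hn (fun x _ => hf x) hf', hfab, sub_self, mul_zero,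
    zero_sub]
  have : (n : ℂ) ≠ 0 := Int.cast_ne_zero.mpr hn
  push_cast
  field_simp

theorem summable_fourierCoeffOn_of_contDiff (hab : a < b) {f : ℝ → ℂ} (hf : ContDiff ℝ 2 f)
    (hper : Periodic f (b - a)) : Summable (fourierCoeffOn hab f) := by
  obtain ⟨hf₁, -, hf'⟩ := contDiff_succ_iff_deriv.mp (show ContDiff ℝ (1 + 1) f from hf)
  obtain ⟨hf₂, -, hf''⟩ := contDiff_succ_iff_deriv.mp (show ContDiff ℝ (0 + 1) (deriv f) by
    simpa using hf')
  obtain ⟨M, hM⟩ := isCompact_Icc.exists_bound_of_continuousOn hf''.continuous.continuousOn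
  have hend {g : ℝ → ℂ} (hg : Periodic g (b - a)) : g b = g a := by simpa using hg a
  have hcoeff {n : ℤ} (hn : n ≠ 0) : fourierCoeffOn hab f n =
      (((b - a : ℝ) : ℂ) / (2 * π * I * n)) ^ 2 * fourierCoeffOn hab (deriv (deriv f)) n := by
    rw [fourierCoeffOn_of_hasDerivAt_of_eq hab (fun x => (hf₁ x).hasDerivAt)
        (hf'.continuous.intervalIntegrable _ _) (hend hper) hn,
      fourierCoeffOn_of_hasDerivAt_of_eq hab (fun x => (hf₂ x).hasDerivAt)
        (hf''.continuous.intervalIntegrable _ _) (hend hper.deriv) hn]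
    ring
  refine .of_norm_bounded_eventually
    ((Real.summable_one_div_int_pow.mpr one_lt_two).mul_left (((b - a) / (2 * π)) ^ 2 * M)) ?_
  filter_upwards [Filter.eventually_cofinite_ne 0] with n hn
  have hnorm :
      ‖((b - a : ℝ) : ℂ) / (2 * π * I * n)‖ ^ 2 = ((b - a) / (2 * π)) ^ 2 * (1 / n ^ 2) := by
    have hn' : (n : ℝ) ≠ 0 := Int.cast_ne_zero.mpr hn
    rw [norm_div, norm_real, Real.norm_of_nonneg (sub_pos.mpr hab).le]
    simp only [norm_mul, norm_I, RCLike.norm_ofNat, norm_real, Real.norm_of_nonneg Real.pi_pos.le,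
      norm_intCast]
    field_simp
    rw [sq_abs]
  rw [hcoeff hn, norm_mul, norm_pow, hnorm, mul_right_comm]
  gcongr
  exact norm_fourierCoeffOn_le hab hM n

theorem hasSum_fourierCoeffOn_mul_fourier (hab : a < b) {f : ℝ → ℂ} (hf : Continuous f)
    (hper : Periodic f (b - a)) (hs : Summable (fourierCoeffOn hab f)) (x : ℝ) :
    HasSum (fun n => fourierCoeffOn hab f n * fourier n (x : AddCircle (b - a))) (f x) := by
  have : Fact (0 < b - a) := ⟨sub_pos.mpr hab⟩
  let F : C(AddCircle (b - a), ℂ) := ⟨hper.lift, continuous_coinduced_dom.mpr hf⟩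
  have hF : fourierCoeff F = fourierCoeffOn hab f := funext fun n => by
    rw [fourierCoeff_eq_intervalIntegral _ n a, fourierCoeffOn_eq_integral, add_sub_cancel]
    rfl
  have h := has_pointwise_sum_fourier_series_of_summable (hF ▸ hs) (x : AddCircle (b - a))
  rw [hF] at h
  exact h

end FourierCoeffOn

section Bessel

theorem besselJ_eq_fourierCoeffOn (m : ℤ) (z : ℂ) :
    besselJ m z = fourierCoeffOn Real.two_pi_pos (fun θ : ℝ => exp (z * sin θ * I)) m := by
  rw [fourierCoeffOn_eq_integral, besselJ, sub_zero, real_smul]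
  push_cast
  congr 1
  refine intervalIntegral.integral_congr fun θ _ => ?_
  rw [fourier_coe_apply, smul_eq_mul, ← exp_add]
  congr 1
  push_cast
  field_simp
  ring

theorem hasSum_besselJ_mul_exp_zpow (z : ℂ) (θ : ℝ) :
    HasSum (fun n : ℤ => besselJ n z * exp (θ * I) ^ n) (exp (z * sin θ * I)) := by
  have hper : Periodic (fun θ : ℝ => exp (z * sin θ * I)) (2 * π - 0) := fun x => by
    simp [sin_add_two_pi]
  have hsin : ContDiff ℝ 2 (fun θ : ℝ => sin (θ : ℂ)) :=
    (contDiff_sin.restrict_scalars ℝ).comp ofRealCLM.contDiff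
  have hf : ContDiff ℝ 2 (fun θ : ℝ => exp (z * sin θ * I)) := by fun_prop
  have h := hasSum_fourierCoeffOn_mul_fourier Real.two_pi_pos hf.continuous hper
    (summable_fourierCoeffOn_of_contDiff Real.two_pi_pos hf hper) θ
  simp only [← besselJ_eq_fourierCoeffOn, fourier_coe_apply, sub_zero] at h
  convert h using 3 with n
  rw [← exp_int_mul]
  congr 1
  push_cast
  field_simp

theorem besselJ_neg (m : ℤ) (z : ℂ) : besselJ (-m) z = (-1) ^ m * besselJ m z := by
  set φ : ℤ → ℝ → ℂ := fun m θ => exp (z * sin θ * I - m * θ * I) with hφ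
  have hper : Periodic (φ m) (2 * π) := fun θ => by
    simp only [hφ]
    push_cast
    rw [sin_add_two_pi, show z * sin θ * I - m * (θ + 2 * π) * I =
      z * sin θ * I - m * θ * I - m * (2 * π * I) by ring, exp_sub, exp_int_mul_two_pi_mul_I,
      div_one]
  have hrefl (θ : ℝ) : φ (-m) θ = (-1) ^ m * φ m (π - θ) := by
    simp only [hφ]
    push_cast
    rw [sin_pi_sub, ← exp_pi_mul_I, ← exp_int_mul, ← exp_add]
    congr 1
    ring
  have hint : ∫ θ in (0)..(2 * π), φ m (π - θ) = ∫ θ in (0)..(2 * π), φ m θ := by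
    rw [intervalIntegral.integral_comp_sub_left, sub_zero]
    have h := hper.intervalIntegral_add_eq (π - 2 * π) 0
    rwa [sub_add_cancel, zero_add] at h
  calc besselJ (-m) z = 1 / (2 * π) * ∫ θ in (0)..(2 * π), φ (-m) θ := rfl
    _ = 1 / (2 * π) * ((-1) ^ m * ∫ θ in (0)..(2 * π), φ m (π - θ)) := by
      simp_rw [hrefl, intervalIntegral.integral_const_mul]
    _ = (-1) ^ m * besselJ m z := by rw [hint]; exact mul_left_comm ..

theorem besselJ_neg_of_even {m : ℤ} (hm : Even m) (z : ℂ) : besselJ (-m) z = besselJ m z := by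
  rw [besselJ_neg, hm.neg_one_zpow, one_mul]

end Bessel

namespace IsPrimitiveRoot

variable {K : Type*} [Field K] {ζ : K} {k : ℕ}

theorem geom_sum_zpow (hζ : IsPrimitiveRoot ζ k) (n : ℤ) :
    ∑ j ∈ range k, (ζ ^ n) ^ j = if (k : ℤ) ∣ n then (k : K) else 0 := by
  split_ifs with hkn
  · simp [(hζ.zpow_eq_one_iff_dvd n).mpr hkn]
  · rw [geom_sum_eq (mt (hζ.zpow_eq_one_iff_dvd n).mp hkn), ← zpow_natCast, ← zpow_mul,
      mul_comm, zpow_mul, zpow_natCast, hζ.pow_eq_one, one_zpow, sub_self, zero_div]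

theorem hasSum_ite_dvd [TopologicalSpace K] [IsTopologicalRing K] (hζ : IsPrimitiveRoot ζ k)
    (hk : (k : K) ≠ 0) {t : K} {c : ℤ → K} {s : ℕ → K}
    (hs : ∀ j ∈ range k, HasSum (fun n => c n * (t * ζ ^ j) ^ n) (s j)) :
    HasSum (fun n => if (k : ℤ) ∣ n then c n * t ^ n else 0) ((k : K)⁻¹ * ∑ j ∈ range k, s j) := by
  have hterm (n : ℤ) : (k : K)⁻¹ * ∑ j ∈ range k, c n * (t * ζ ^ j) ^ n =
      if (k : ℤ) ∣ n then c n * t ^ n else 0 := by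
    simp_rw [mul_zpow, ← zpow_natCast ζ, ← zpow_mul, mul_comm _ n, zpow_mul, zpow_natCast,
      ← mul_sum, hζ.geom_sum_zpow]
    split_ifs
    · field_simp
    · simp only [mul_zero]
  simpa only [hterm] using (hasSum_sum hs).mul_left (k : K)⁻¹

end IsPrimitiveRoot

theorem sum_range_four_exp_mul_sin_add_pi_div_two_mul_I (z : ℂ) (α : ℝ) :
    ∑ j ∈ range 4, exp (z * sin ((α + j * (π / 2) : ℝ)) * I) =
      2 * (cos (z * Real.sin α) + cos (z * Real.cos α)) := by
  simp only [sum_range_succ, sum_range_zero]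
  push_cast
  have h2 : (α : ℂ) + 2 * (π / 2) = α + π := by ring
  have h3 : (α : ℂ) + 3 * (π / 2) = α + π / 2 + π := by ring
  rw [zero_mul, add_zero, one_mul, h2, h3, sin_add_pi, sin_add_pi, sin_add_pi_div_two, mul_add,
    two_cos, two_cos]
  ring_nf

theorem hasSum_besselJ_four_mul_mul_exp_zpow (z : ℂ) (α : ℝ) :
    HasSum (fun m : ℤ => besselJ (4 * m) z * exp (α * I) ^ (4 * m))
      ((cos (z * Real.sin α) + cos (z * Real.cos α)) / 2) := by
  set w := exp (α * I)
  have hquarter : ∀ j ∈ range 4, HasSum (fun n => besselJ n z * (w * I ^ j) ^ n)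
      (exp (z * sin ((α + j * (π / 2) : ℝ)) * I)) := fun j _ => by
    convert hasSum_besselJ_mul_exp_zpow z (α + j * (π / 2)) using 4
    push_cast
    rw [add_mul, exp_add, show (j : ℂ) * (π / 2) * I = j * (π / 2 * I) by ring, exp_nat_mul,
      exp_pi_div_two_mul_I]
  have hfilter := isPrimitiveRoot_I.hasSum_ite_dvd (by norm_num) hquarter
  rw [sum_range_four_exp_mul_sin_add_pi_div_two_mul_I] at hfilter
  have h := ((mul_right_injective₀ (four_ne_zero (α := ℤ))).hasSum_iff ?_).mpr hfilter
  · simp only [Function.comp_def, Nat.cast_ofNat, dvd_mul_right, if_true] at h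
    rwa [show (4 : ℂ)⁻¹ * (2 * (cos (z * Real.sin α) + cos (z * Real.cos α))) =
      (cos (z * Real.sin α) + cos (z * Real.cos α)) / 2 by ring] at h
  · rintro n hn
    rw [if_neg]
    rintro ⟨m, rfl⟩
    exact hn ⟨m, rfl⟩

theorem besselJ_four_mul_neg (m : ℤ) (z : ℂ) : besselJ (4 * -m) z = besselJ (4 * m) z := by
  rw [mul_neg, besselJ_neg_of_even ⟨2 * m, by ring⟩]

theorem hasSum_besselJ_four_mul_mul_cos (z : ℂ) (α : ℝ) :
    HasSum (fun m : ℤ => besselJ (4 * m) z * Real.cos (4 * m * α))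
      ((cos (z * Real.sin α) + cos (z * Real.cos α)) / 2) := by
  have h := hasSum_besselJ_four_mul_mul_exp_zpow z α
  have hterm (m : ℤ) : (besselJ (4 * m) z * exp (α * I) ^ (4 * m) +
      besselJ (4 * -m) z * exp (α * I) ^ (4 * -m)) / 2 =
      besselJ (4 * m) z * Real.cos (4 * m * α) := by
    rw [besselJ_four_mul_neg, ofReal_cos, cos, ← exp_int_mul, ← exp_int_mul]
    push_cast
    ring_nf
  simpa only [Function.comp_def, Equiv.neg_apply, hterm, add_self_div_two] using
    (h.add ((Equiv.neg ℤ).hasSum_iff.mpr h)).div_const 2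

theorem statement6 (z α : ℝ) :
    besselJ 0 z + 2 * ∑' k : ℕ, besselJ (4 * (k + 1)) z * (Real.cos (4 * (k + 1) * α) : ℂ) =
      (1 / 2 : ℂ) * ((Real.cos (z * Real.sin α) : ℂ) + (Real.cos (z * Real.cos α) : ℂ)) := by
  have h := hasSum_besselJ_four_mul_mul_cos z α
  have heven : Function.Even fun m : ℤ => besselJ (4 * m) z * (Real.cos (4 * m * α) : ℂ) :=
    fun m => by
      dsimp only
      rw [besselJ_four_mul_neg]
      push_cast
      rw [mul_neg, neg_mul, cos_neg]
  have hsplit := tsum_int_eq_zero_add_two_mul_tsum_pnat heven h.summable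
  rw [h.tsum_eq, tsum_pnat_eq_tsum_succ (f := fun n : ℕ =>
    besselJ (4 * (n : ℤ)) z * (Real.cos (4 * ((n : ℤ) : ℝ) * α) : ℂ))] at hsplit
  push_cast at hsplit ⊢
  rw [mul_zero, zero_mul, cos_zero, mul_one, nsmul_eq_mul] at hsplit
  linear_combination -hsplit
end

section
/- For all integers p, q and real z: Σ_{k∈ℤ} (-1)^k J_{p+2k}(z)·J_{q−2k}(z) = J_{p+q}(z√2)·cos((p−q)π/4). -/
open scoped Real

open Complex MeasureTheory AddCircle

section FourierCoeff

variable {T : ℝ}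

theorem fourier_add_apply (n : ℤ) (x y : AddCircle T) :
    fourier n (x + y) = fourier n x * fourier n y := by
  simp only [fourier_apply, smul_add, toCircle_add, Circle.coe_mul]

theorem fourier_neg_apply_neg (n : ℤ) (x : AddCircle T) : fourier (-n) (-x) = fourier n x := by
  simp only [fourier_apply, neg_smul, smul_neg, neg_neg]

variable [Fact (0 < T)]

theorem fourierCoeff_comp_add_right (f : AddCircle T → ℂ) (a : AddCircle T) (n : ℤ) :
    fourierCoeff (fun x => f (x + a)) n = fourier n a * fourierCoeff f n := by
  simp only [fourierCoeff, smul_eq_mul]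
  rw [← integral_add_right_eq_self (fun x => fourier (-n) x * f (x + a)) (-a),
    ← integral_const_mul]
  refine integral_congr_ae (Filter.Eventually.of_forall fun x => ?_)
  dsimp only
  rw [neg_add_cancel_right, fourier_add_apply, fourier_neg_apply_neg]
  ring

theorem hasSum_fourierCoeff_mul (f g : C(AddCircle T, ℂ)) (n : ℤ) :
    HasSum (fun m : ℤ => fourierCoeff f (n - m) * fourierCoeff g m)
      (fourierCoeff ⇑(f * g) n) := by
  have parseval := fourierBasis.hasSum_inner_mul_inner
    (ContinuousMap.toLp 2 haarAddCircle ℂ (star f * fourier n))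
    (ContinuousMap.toLp 2 haarAddCircle ℂ g)
  simp only [coe_fourierBasis, fourierLp, ContinuousMap.inner_toLp, ContinuousMap.mul_apply,
    ContinuousMap.star_apply, map_mul, star_def, conj_conj, ← fourier_neg] at parseval
  have hval : fourierCoeff ⇑(f * g) n = ∫ x, g x * (f x * fourier (-n) x) ∂haarAddCircle :=
    integral_congr_ae (Filter.Eventually.of_forall fun x => by
      simp only [ContinuousMap.mul_apply, smul_eq_mul]
      ring)
  rw [hval]
  refine parseval.congr_fun fun m => ?_
  congr 1 <;> refine integral_congr_ae (Filter.Eventually.of_forall fun x => ?_) <;> dsimp only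
  · rw [smul_eq_mul, neg_sub, sub_eq_add_neg, add_comm, fourier_add]
    ring
  · rw [smul_eq_mul, mul_comm]

end FourierCoeff

section JacobiAnger

local instance : Fact (0 < 2 * π) := ⟨Real.two_pi_pos⟩

theorem fourier_coe_two_pi (n : ℤ) (x : ℝ) :
    fourier n (x : AddCircle (2 * π)) = exp (n * x * I) := by
  rw [fourier_coe_apply]
  congr 1
  push_cast
  field_simp

/-- `θ ↦ exp (i z sin θ)`, written through `exp (± i θ)` so that it lives on the circle. -/
noncomputable def jacobiAnger (z : ℂ) : C(AddCircle (2 * π), ℂ) :=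
  ⟨fun x => exp (z / 2 * (fourier 1 x - fourier (-1) x)), by fun_prop⟩

theorem fourierCoeff_jacobiAnger (z : ℂ) (n : ℤ) :
    fourierCoeff (jacobiAnger z) n = besselJ n z := by
  rw [fourierCoeff_eq_intervalIntegral _ n 0, zero_add, besselJ, Complex.real_smul]
  push_cast
  congr 1
  refine intervalIntegral.integral_congr fun x _ => ?_
  simp only [jacobiAnger, ContinuousMap.coe_mk, fourier_coe_two_pi, smul_eq_mul, ← exp_add,
    Complex.sin]
  congr 1
  simp only [Int.cast_neg, Int.cast_one, neg_mul, one_mul]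
  linear_combination (z * (exp (x * I) - exp (-(x * I))) / 2) * I_sq

theorem jacobiAnger_add_mul_sub (z : ℂ) (α : ℝ) (x : AddCircle (2 * π)) :
    jacobiAnger z (x + α) * jacobiAnger z (x - α) = jacobiAnger (2 * Real.cos α * z) x := by
  simp only [jacobiAnger, ContinuousMap.coe_mk, ← exp_add, sub_eq_add_neg x, ← coe_neg,
    fourier_add_apply, fourier_coe_two_pi]
  congr 1
  push_cast
  rw [Complex.cos]
  ring_nf

theorem hasSum_exp_mul_besselJ_mul_besselJ (z : ℂ) (α : ℝ) (p q : ℤ) :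
    HasSum (fun j : ℤ => exp ((p - q + 2 * j) * α * I) * (besselJ (p + j) z * besselJ (q - j) z))
      (besselJ (p + q) (2 * Real.cos α * z)) := by
  let f := (jacobiAnger z).comp (ContinuousMap.addRight (α : AddCircle (2 * π)))
  let g := (jacobiAnger z).comp (ContinuousMap.addRight ((-α : ℝ) : AddCircle (2 * π)))
  have hfg : f * g = jacobiAnger (2 * Real.cos α * z) := by
    ext x
    simpa [f, g, sub_eq_add_neg] using jacobiAnger_add_mul_sub z α x
  have h := hasSum_fourierCoeff_mul f g (p + q)
  rw [hfg, fourierCoeff_jacobiAnger] at h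
  refine ((Equiv.subLeft q).hasSum_iff.mpr h).congr_fun fun j => ?_
  simp only [Function.comp_apply, Equiv.subLeft_apply, f, g, ContinuousMap.coe_comp,
    ContinuousMap.coe_addRight]
  rw [Function.comp_def, Function.comp_def, fourierCoeff_comp_add_right,
    fourierCoeff_comp_add_right, fourierCoeff_jacobiAnger, fourierCoeff_jacobiAnger,
    fourier_coe_two_pi, fourier_coe_two_pi,
    show p + q - (q - j) = p + j by ring, mul_mul_mul_comm, ← exp_add]
  congr 2
  push_cast
  ring

theorem hasSum_cos_mul_besselJ_mul_besselJ (z : ℂ) (α : ℝ) (p q : ℤ) :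
    HasSum (fun j : ℤ => (Real.cos (2 * j * α) : ℂ) * (besselJ (p + j) z * besselJ (q - j) z))
      ((Real.cos ((p - q) * α) : ℂ) * besselJ (p + q) (2 * Real.cos α * z)) := by
  have hα := hasSum_exp_mul_besselJ_mul_besselJ z α p q
  have hnegα := hasSum_exp_mul_besselJ_mul_besselJ z (-α) p q
  rw [Real.cos_neg] at hnegα
  have h := (hα.mul_left (exp (-((p - q) * α) * I) / 2)).add
    (hnegα.mul_left (exp ((p - q) * α * I) / 2))
  set J := besselJ (p + q) (2 * Real.cos α * z)
  have hval : (Real.cos ((p - q) * α) : ℂ) * J =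
      exp (-((p - q) * α) * I) / 2 * J + exp ((p - q) * α * I) / 2 * J := by
    rw [ofReal_cos]
    push_cast
    linear_combination (J / 2) * two_cos ((p - q) * α)
  rw [hval]
  refine h.congr_fun fun j => ?_
  have e₁ : exp (-((p - q) * α) * I) * exp ((p - q + 2 * j) * α * I) =
      exp ((2 * j * α : ℝ) * I) := by
    rw [← exp_add]; push_cast; ring_nf
  have e₂ : exp ((p - q) * α * I) * exp ((p - q + 2 * j) * (-α : ℝ) * I) =
      exp (-(2 * j * α : ℝ) * I) := by
    rw [← exp_add]; push_cast; ring_nf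
  rw [ofReal_cos]
  linear_combination (besselJ (p + j) z * besselJ (q - j) z / 2) *
    (two_cos ((2 * j * α : ℝ)) - e₁ - e₂)

end JacobiAnger

theorem hasSum_neg_one_zpow_mul_two_mul_of_hasSum_cos {G : ℤ → ℂ} {a : ℂ}
    (h : HasSum (fun j : ℤ => (Real.cos (j * π / 2) : ℂ) * G j) a) :
    HasSum (fun k : ℤ => (-1) ^ k * G (2 * k)) a := by
  have hodd : ∀ j ∉ Set.range (fun k : ℤ => 2 * k),
      (Real.cos (j * π / 2) : ℂ) * G j = 0 := by
    intro j hj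
    obtain ⟨k, rfl⟩ : Odd j :=
      Int.not_even_iff_odd.mp fun ⟨k, hk⟩ => hj ⟨k, by dsimp only; omega⟩
    rw [Real.cos_eq_zero_iff.mpr ⟨k, by push_cast; ring⟩, ofReal_zero, zero_mul]
  refine (((mul_right_injective₀ two_ne_zero).hasSum_iff hodd).mpr h).congr_fun fun k => ?_
  rw [Function.comp_apply, show ((2 * k : ℤ) : ℝ) * π / 2 = k * π by push_cast; ring,
    Real.cos_int_mul_pi]
  push_cast
  rfl

theorem statement17 (p q : ℤ) (z : ℝ) :
    (∑' k : ℤ, (-1 : ℂ) ^ k * besselJ (p + 2 * k) z * besselJ (q - 2 * k) z) =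
      besselJ (p + q) ((z * Real.sqrt 2 : ℝ) : ℂ) * (Real.cos ((p - q) * π / 4) : ℂ) := by
  have h := hasSum_cos_mul_besselJ_mul_besselJ z (π / 4) p q
  have hz : 2 * (Real.cos (π / 4) : ℂ) * z = ((z * √2 : ℝ) : ℂ) := by
    rw [Real.cos_pi_div_four]; push_cast; ring
  simp only [hz, show ∀ j : ℝ, 2 * j * (π / 4) = j * π / 2 from fun j => by ring] at h
  simp only [mul_assoc]
  rw [(hasSum_neg_one_zpow_mul_two_mul_of_hasSum_cos h).tsum_eq, mul_comm, mul_div_assoc]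
end
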